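/- For the zero-inflated negative binomial GAS model with unit scaling, the score at observation 0 is uniformly bounded in f: for all f ∈ ℝ, α > 0, π ∈ [0,1), |(π − 1)·exp(f)/((α·exp(f) + 1)(1 + π(α·exp(f) + 1)^(1/α) − π))| ≤ (1 − π)/α. -/

import Mathlib

/-! The zero-inflation factor in the denominator is at least `1`, so the score is dominated by
the negative binomial factor `exp f / (α exp f + 1)`, which increases to `1 / α`. -/

theorem div_mul_add_one_le_inv {α x : ℝ} (hα : 0 < α) (hx : 0 ≤ x) :
    x / (α * x + 1) ≤ α⁻¹ := by
  rw [div_le_iff₀ (by positivity), mul_add, inv_mul_cancel_left₀ hα.ne']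
  linarith [inv_pos.2 hα]

theorem one_le_one_add_mul_sub {p y : ℝ} (hp : 0 ≤ p) (hy : 1 ≤ y) : 1 ≤ 1 + p * y - p := by
  nlinarith

theorem zinb_score_zero_bound (f α π : ℝ) (hα : 0 < α)
    (hπ : π ∈ Set.Ico (0 : ℝ) 1) :
    |(π - 1) * Real.exp f /
      ((α * Real.exp f + 1) * (1 + π * (α * Real.exp f + 1) ^ (1 / α : ℝ) - π))|
      ≤ (1 - π) / α := by
  obtain ⟨hπ0, hπ1⟩ := hπ
  set x := Real.exp f
  have hx : 0 < x := Real.exp_pos f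
  set B := 1 + π * (α * x + 1) ^ (1 / α : ℝ) - π
  have hA : 1 ≤ α * x + 1 := by linarith [mul_pos hα hx]
  have hB : 1 ≤ B := one_le_one_add_mul_sub hπ0 (Real.one_le_rpow hA (by positivity))
  have hscore_nonpos : (π - 1) * x / ((α * x + 1) * B) ≤ 0 :=
    div_nonpos_of_nonpos_of_nonneg (mul_nonpos_of_nonpos_of_nonneg (by linarith) hx.le)
      (mul_nonneg (by linarith) (by linarith))
  calc |(π - 1) * x / ((α * x + 1) * B)| = (1 - π) * (x / (α * x + 1)) / B := by
        rw [abs_of_nonpos hscore_nonpos, ← div_div]; ring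
    _ ≤ (1 - π) * (x / (α * x + 1)) := div_le_self (by positivity) hB
    _ ≤ (1 - π) * α⁻¹ :=
        mul_le_mul_of_nonneg_left (div_mul_add_one_le_inv hα hx.le) (by linarith)
    _ = (1 - π) / α := (div_eq_mul_inv _ _).symm
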